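/- arXiv:2012.03566 — 6 statements merged into one kernel-verified Lean document; each statement's English description precedes it below -/
import Mathlib

section
/- Let m = 2k+1 be an odd positive integer, u > 0, h = u² + u^{2m}, and let L⁺ be the arc of the circle x² + y² = h lying in y ≥ x^m from (-u,(-u)^m) to (u,u^m). Then J_{1,1} := ∫_{L⁺} x y dx = -(2/3) u^{3m}. -/
/-!
Parametrising the arc by angle, `x y dx` becomes `-(√h)³ cos θ sin² θ dθ`, whose primitive is
`sin³ θ / 3`. Since `sin (π + θ_B) = -sin θ_B` and `√h sin θ_B = u^m`, the integral over the
half-turn from `θ_B` to `π + θ_B` is `-(2/3) (√h sin θ_B)³ = -(2/3) u^(3m)`.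
-/

/-- The angle of the right intersection point `(u, u^m)` of the circle
`x^2 + y^2 = u^2 + u^(2m)` with the switching curve `y = x^m`. -/
noncomputable def thetaB (m : ℕ) (u : ℝ) : ℝ :=
  Real.arcsin (u ^ m / Real.sqrt (u ^ 2 + u ^ (2 * m)))

/-- `J_{i,j} = ∫_{L⁺} x^i y^j dx` along the arc of the circle `x^2 + y^2 = u^2 + u^(2m)`
lying in `y ≥ x^m` (for odd `m`), oriented from `(-u, -u^m)` (angle `π + θ_B`)
to `(u, u^m)` (angle `θ_B`), i.e. clockwise through the top.  With
`x = √h cos θ`, `y = √h sin θ`, `dx = -√h sin θ dθ`, traversal from `π + θ_B`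
down to `θ_B` gives the integral below. -/
noncomputable def Jodd (m : ℕ) (u : ℝ) (i j : ℕ) : ℝ :=
  ∫ t in thetaB m u..(Real.pi + thetaB m u),
    Real.sqrt (u ^ 2 + u ^ (2 * m)) ^ (i + j + 1) * Real.cos t ^ i * Real.sin t ^ (j + 1)

/-- `I_{i,j} = ∫_{L⁻} x^i y^j dx` along the complementary lower arc, oriented from
`(u, u^m)` (angle `θ_B`) down through the bottom to `(-u, -u^m)` (angle `θ_B - π`). -/
noncomputable def Iodd (m : ℕ) (u : ℝ) (i j : ℕ) : ℝ :=
  ∫ t in (thetaB m u - Real.pi)..thetaB m u,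
    Real.sqrt (u ^ 2 + u ^ (2 * m)) ^ (i + j + 1) * Real.cos t ^ i * Real.sin t ^ (j + 1)

open Real

lemma integral_cos_mul_sin_sq (a b : ℝ) :
    ∫ t in a..b, cos t * sin t ^ 2 = (sin b ^ 3 - sin a ^ 3) / 3 := by
  have hderiv : ∀ x ∈ Set.uIcc a b,
      HasDerivAt (fun t => sin t ^ 3 / 3) (cos x * sin x ^ 2) x := fun x _ => by
    have h : HasDerivAt (fun t => sin t ^ 3 / 3) ((3 : ℕ) * sin x ^ 2 * cos x / 3) x :=
      ((hasDerivAt_sin x).pow 3).div_const 3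
    convert h using 1
    push_cast
    ring
  rw [intervalIntegral.integral_eq_sub_of_hasDerivAt hderiv
    ((continuous_cos.mul (continuous_sin.pow 2)).intervalIntegrable a b)]
  ring

lemma integral_cos_mul_sin_sq_half_turn (a : ℝ) :
    ∫ t in a..π + a, cos t * sin t ^ 2 = -(2 / 3) * sin a ^ 3 := by
  rw [integral_cos_mul_sin_sq, add_comm π, sin_add_pi]
  ring

lemma abs_pow_le_sqrt_sq_add_pow (m : ℕ) (u : ℝ) : |u ^ m| ≤ √(u ^ 2 + u ^ (2 * m)) :=
  abs_le_sqrt (by rw [← pow_mul, mul_comm]; nlinarith [sq_nonneg u])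

lemma sin_thetaB (m : ℕ) (u : ℝ) : sin (thetaB m u) = u ^ m / √(u ^ 2 + u ^ (2 * m)) := by
  have hle : |u ^ m / √(u ^ 2 + u ^ (2 * m))| ≤ 1 := by
    rw [abs_div, abs_of_nonneg (sqrt_nonneg _)]
    exact div_le_one_of_le₀ (abs_pow_le_sqrt_sq_add_pow m u) (sqrt_nonneg _)
  exact sin_arcsin (abs_le.mp hle).1 (abs_le.mp hle).2

-- When the radius is `0` the quotient is junk (`x / 0 = 0`), but then `u ^ m = 0` too.
lemma sqrt_mul_sin_thetaB (m : ℕ) (u : ℝ) : √(u ^ 2 + u ^ (2 * m)) * sin (thetaB m u) = u ^ m := by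
  rw [sin_thetaB]
  refine mul_div_cancel_of_imp' fun h0 => abs_nonpos_iff.mp ?_
  simpa only [h0] using abs_pow_le_sqrt_sq_add_pow m u

lemma Jodd_one_one (m : ℕ) (u : ℝ) :
    Jodd m u 1 1 = -(2 / 3) * (√(u ^ 2 + u ^ (2 * m)) * sin (thetaB m u)) ^ 3 := by
  have hfactor : Jodd m u 1 1 = √(u ^ 2 + u ^ (2 * m)) ^ 3 *
      ∫ t in thetaB m u..π + thetaB m u, cos t * sin t ^ 2 := by
    rw [Jodd, ← intervalIntegral.integral_const_mul]
    congr 1 with t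
    ring
  rw [hfactor, integral_cos_mul_sin_sq_half_turn]
  ring

theorem J11_eq_general (m : ℕ) (u : ℝ) :
    Jodd m u 1 1 = -(2 / 3) * u ^ (3 * m) := by
  rw [Jodd_one_one, sqrt_mul_sin_thetaB, ← pow_mul, mul_comm m]

/-- for `m = 2k+1` and `u > 0`, `J_{1,1} = ∫_{L⁺} x y dx = -(2/3) u^(3m)`. -/
theorem J11_eq (k : ℕ) (m : ℕ) (hm : m = 2 * k + 1) (u : ℝ) (hu : 0 < u) :
    Jodd m u 1 1 = -(2 / 3) * u ^ (3 * m) :=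
  J11_eq_general m u
end

section
/- Let m be an odd positive integer, u > 0, h = u² + u^{2m}. Then J_{0,1} := ∫_{L⁺} y dx = (π/2)(u² + u^{2m}), where L⁺ is the arc of the circle x² + y² = h with y ≥ x^m from (-u,-u^m) to (u,u^m). -/
/-- for odd `m` and `u > 0`, `J_{0,1} = ∫_{L⁺} y dx = (π/2)(u² + u^(2m))`. -/
theorem J01_eq (m : ℕ) (hm : Odd m) (u : ℝ) (hu : 0 < u) :
    Jodd m u 0 1 = Real.pi / 2 * (u ^ 2 + u ^ (2 * m)) := by
  have hh : (0:ℝ) ≤ u ^ 2 + u ^ (2 * m) := by positivity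
  have hsq : Real.sqrt (u ^ 2 + u ^ (2 * m)) ^ 2 = u ^ 2 + u ^ (2 * m) :=
    Real.sq_sqrt hh
  unfold Jodd
  simp only [pow_zero, mul_one, one_mul]
  rw [intervalIntegral.integral_const_mul, integral_sin_sq]
  rw [add_comm Real.pi, Real.sin_add_pi, Real.cos_add_pi]
  norm_num [hsq]
  ring
end

section
/- Let m be an odd positive integer, h = u² + u^{2m} with u > 0, and define J_{i,j} = ∫_{L⁺} x^i y^j dx and I_{i,j} = ∫_{L⁻} x^i y^j dx where L⁺ (resp. L⁻) is the arc of the circle x² + y² = h with y ≥ x^m (resp. y ≤ x^m), oriented so that L⁺ runs from (-u,-u^m) to (u,u^m) and L⁻ from (u,u^m) to (-u,-u^m). Then for all i, l, s ≥ 0: J_{i,2s} = -I_{i,2s}, J_{2l,2s+1} = I_{2l,2s+1}, and J_{2l+1,2s+1} = -I_{2l+1,2s+1}. -/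
lemma shift_lemma (C a : ℝ) (i j : ℕ) :
    (∫ t in a..(a + Real.pi), C * Real.cos t ^ i * Real.sin t ^ (j + 1)) =
      (-1 : ℝ) ^ (i + j + 1) *
        ∫ t in (a - Real.pi)..a, C * Real.cos t ^ i * Real.sin t ^ (j + 1) := by
  have h1 : (∫ t in (a - Real.pi)..a,
        C * Real.cos (t + Real.pi) ^ i * Real.sin (t + Real.pi) ^ (j + 1))
      = ∫ t in a..(a + Real.pi), C * Real.cos t ^ i * Real.sin t ^ (j + 1) := by
    have := intervalIntegral.integral_comp_add_right (a := a - Real.pi) (b := a)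
      (fun t => C * Real.cos t ^ i * Real.sin t ^ (j + 1)) Real.pi
    simpa using this
  rw [← h1, ← intervalIntegral.integral_const_mul]
  apply intervalIntegral.integral_congr
  intro t _
  simp only [Real.cos_add_pi, Real.sin_add_pi]
  rw [neg_pow (Real.cos t) i, neg_pow (Real.sin t) (j + 1)]
  rw [show i + j + 1 = i + (j + 1) from by ring, pow_add]
  ring

lemma zero_lemma (C a : ℝ) (i j : ℕ) (hi : Odd i) (hj : Odd (j + 1)) :
    (∫ t in (a - Real.pi)..a, C * Real.cos t ^ i * Real.sin t ^ (j + 1)) = 0 := by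
  set g : ℝ → ℝ := fun t => C * Real.cos t ^ i * Real.sin t ^ (j + 1) with hg
  have hper : Function.Periodic g Real.pi := by
    intro t
    simp only [hg, Real.cos_add_pi, Real.sin_add_pi, hi.neg_pow, hj.neg_pow]
    ring
  have h1 : (∫ t in (a - Real.pi)..a, g t) =
      ∫ t in (-(Real.pi/2))..(-(Real.pi/2) + Real.pi), g t := by
    have := hper.intervalIntegral_add_eq (a - Real.pi) (-(Real.pi/2))
    simpa using this
  have h2 : (-(Real.pi/2) + Real.pi) = Real.pi/2 := by ring
  rw [h1, h2]
  have hodd : ∀ t, g (-t) = -g t := by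
    intro t
    simp only [hg, Real.cos_neg, Real.sin_neg, hj.neg_pow]
    ring
  have h3 : (∫ t in (-(Real.pi/2))..(Real.pi/2), g (-t)) =
      ∫ t in (-(Real.pi/2))..(Real.pi/2), g t := by
    have := intervalIntegral.integral_comp_neg (a := -(Real.pi/2)) (b := Real.pi/2) g
    simpa using this
  have h4 : (∫ t in (-(Real.pi/2))..(Real.pi/2), g (-t)) =
      -∫ t in (-(Real.pi/2))..(Real.pi/2), g t := by
    simp_rw [hodd]
    exact intervalIntegral.integral_neg
  linarith [h3, h4]

/-- symmetry relations between the integrals over the upper and lower arcs. -/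
theorem J_I_symmetry (m : ℕ) (hm : Odd m) (u : ℝ) (hu : 0 < u) (i l s : ℕ) :
    Jodd m u i (2 * s) = -Iodd m u i (2 * s) ∧
    Jodd m u (2 * l) (2 * s + 1) = Iodd m u (2 * l) (2 * s + 1) ∧
    Jodd m u (2 * l + 1) (2 * s + 1) = -Iodd m u (2 * l + 1) (2 * s + 1) := by
  have key : ∀ i j : ℕ, Jodd m u i j = (-1 : ℝ) ^ (i + j + 1) * Iodd m u i j := by
    intro i j
    unfold Jodd Iodd
    rw [add_comm Real.pi (thetaB m u)]
    exact shift_lemma _ _ i j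
  refine ⟨?_, ?_, ?_⟩
  · rcases Nat.even_or_odd i with hi | hi
    · rw [key]
      have h : Odd (i + 2 * s + 1) := by
        rcases hi with ⟨k, hk⟩; exact ⟨k + s, by omega⟩
      rw [h.neg_one_pow]; ring
    · have hI : Iodd m u i (2 * s) = 0 := zero_lemma _ _ i (2 * s) hi ⟨s, by omega⟩
      have hJ : Jodd m u i (2 * s) = 0 := by rw [key, hI]; ring
      rw [hI, hJ]; simp
  · rw [key]
    have h : Even (2 * l + (2 * s + 1) + 1) := ⟨l + s + 1, by ring⟩
    rw [h.neg_one_pow]; ring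
  · rw [key]
    have h : Odd (2 * l + 1 + (2 * s + 1) + 1) := ⟨l + s + 1, by ring⟩
    rw [h.neg_one_pow]; ring
end

section
/- For every integer m ≥ 2, the function G(u) = ∫₀^{1/√(1 + u^{2m-2})} √(1 - t²) dt, defined for u ≥ 0, has the convergent expansion G(u) = π/4 + Σ_{k≥1} (-1)^k (k/(2k+1)) u^{(2k+1)(m-1)} for 0 ≤ u < 1. -/
/-!
With `v = u ^ (m - 1)` the upper limit is `cos (arctan v)`, and the substitution `t = cos s`
turns the integral into `∫ s in arctan v..π/2, sin s ^ 2 = π/4 + (v / (1 + v²) - arctan v) / 2`.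
Expanding `v / (1 + v²)` as a geometric series and `arctan v` by Gregory's series, the coefficient
of `v ^ (2k+1)` is `(-1)^k (1 - 1/(2k+1)) / 2 = (-1)^k k/(2k+1)`.
-/

open Real intervalIntegral Set

theorem integral_sqrt_one_sub_sq_cos {θ : ℝ} (h0 : 0 ≤ θ) (hπ : θ ≤ π) :
    ∫ t in (0 : ℝ)..cos θ, √(1 - t ^ 2) = (π / 2 - θ + sin θ * cos θ) / 2 := by
  have hsin : ∀ x ∈ uIcc θ (π / 2), √(1 - cos x ^ 2) = sin x := by
    intro x hx
    rw [mem_uIcc] at hx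
    refine (sin_eq_sqrt_one_sub_cos_sq ?_ ?_).symm <;> rcases hx with hx | hx <;>
      linarith [pi_pos]
  calc ∫ t in (0 : ℝ)..cos θ, √(1 - t ^ 2)
      = ∫ x in π / 2..θ, √(1 - cos x ^ 2) * -sin x := by
        rw [← cos_pi_div_two, ← integral_comp_mul_deriv (fun x _ => hasDerivAt_cos x)
          (by fun_prop) (by fun_prop)]
        rfl
    _ = ∫ x in θ..π / 2, sin x ^ 2 := by
        rw [integral_symm, ← integral_neg]
        refine integral_congr fun x hx => ?_
        rw [hsin x hx]
        ring
    _ = (π / 2 - θ + sin θ * cos θ) / 2 := by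
        rw [integral_sin_sq, sin_pi_div_two, cos_pi_div_two]
        ring

theorem integral_sqrt_one_sub_sq_one_div_sqrt_one_add_sq {v : ℝ} (hv : 0 ≤ v) :
    ∫ t in (0 : ℝ)..1 / √(1 + v ^ 2), √(1 - t ^ 2) =
      π / 4 + (v / (1 + v ^ 2) - arctan v) / 2 := by
  have hprod : sin (arctan v) * cos (arctan v) = v / (1 + v ^ 2) := by
    rw [sin_arctan, cos_arctan, div_mul_div_comm, mul_one, mul_self_sqrt (by positivity)]
  rw [← cos_arctan, integral_sqrt_one_sub_sq_cos (arctan_nonneg.2 hv)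
    ((arctan_lt_pi_div_two v).le.trans (by linarith [pi_pos])), hprod]
  ring

theorem hasSum_div_one_add_sq_sub_arctan {v : ℝ} (hv : ‖v‖ < 1) :
    HasSum (fun k : ℕ => (-1) ^ k * ((k : ℝ) / (2 * k + 1)) * v ^ (2 * k + 1))
      ((v / (1 + v ^ 2) - arctan v) / 2) := by
  have hgeom : HasSum (fun k : ℕ => v * (-v ^ 2) ^ k) (v / (1 + v ^ 2)) := by
    have hv2 : ‖-v ^ 2‖ < 1 := by simpa using pow_lt_one₀ (norm_nonneg v) hv two_ne_zero
    have h := (hasSum_geometric_of_norm_lt_one hv2).mul_left v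
    rwa [sub_neg_eq_add, ← div_eq_mul_inv] at h
  refine ((hgeom.sub (hasSum_arctan hv)).div_const 2).congr_fun fun k => ?_
  have : (2 * k + 1 : ℝ) ≠ 0 := by positivity
  push_cast
  field_simp
  rw [neg_pow, pow_succ _ (2 * k), pow_mul]
  ring

/-- for `m ≥ 2` and `0 ≤ u < 1`, the function
`G(u) = ∫₀^{1/√(1+u^{2m-2})} √(1-t²) dt` has the convergent expansion
`G(u) = π/4 + ∑_{k ≥ 1} (-1)^k (k/(2k+1)) u^{(2k+1)(m-1)}`. -/
theorem G_expansion (m : ℕ) (hm : 2 ≤ m) (u : ℝ) (hu0 : 0 ≤ u) (hu1 : u < 1) :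
    HasSum
      (fun k : ℕ => (-1 : ℝ) ^ (k + 1) * (((k : ℝ) + 1) / (2 * ((k : ℝ) + 1) + 1)) *
        u ^ ((2 * (k + 1) + 1) * (m - 1)))
      ((∫ t in (0 : ℝ)..(1 / Real.sqrt (1 + u ^ (2 * m - 2))), Real.sqrt (1 - t ^ 2)) -
        Real.pi / 4) := by
  set v := u ^ (m - 1)
  have hv0 : 0 ≤ v := pow_nonneg hu0 _
  have hv1 : ‖v‖ < 1 := by
    rw [norm_of_nonneg hv0]
    exact pow_lt_one₀ hu0 hu1 (by omega)
  have hsq : u ^ (2 * m - 2) = v ^ 2 := by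
    rw [← pow_mul]
    congr 1
    omega
  have hpow (k : ℕ) : u ^ ((2 * (k + 1) + 1) * (m - 1)) = v ^ (2 * (k + 1) + 1) := by
    rw [← pow_mul, mul_comm]
  rw [hsq, integral_sqrt_one_sub_sq_one_div_sqrt_one_add_sq hv0, add_sub_cancel_left]
  simp_rw [hpow]
  have h := (hasSum_nat_add_iff' 1).2 (hasSum_div_one_add_sq_sub_arctan hv1)
  simpa only [Finset.sum_range_one, Nat.cast_zero, zero_div, mul_zero, zero_mul, sub_zero,
    Nat.cast_add, Nat.cast_one] using h
end

section
/- Let f₀, f₁, ..., f_p : U → ℝ be linearly independent analytic functions on an open interval U, and suppose some f_j has constant sign on U. Then there exist constants C₀, ..., C_p such that the function f = Σ_{i=0}^p C_i f_i has at least p simple zeros in U. -/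
/-!
Pick points `x₀ < ⋯ < x_p` at which the evaluation vectors `(f_i(x_k))_i` are linearly
independent and interpolate: some `g = ∑ cᵢ fᵢ` has `g(x_k) = (-1)^k f_j(x_k)`. Then `ψ = g / f_j`
is analytic and alternates between `±1` at the `x_k`; being nonconstant, it has only finitely many
critical points on `[x₀, x_p]`. For a `t ∈ (-1, 1)` that is not a critical value, `ψ = t` has a
solution in each `(x_k, x_{k+1})`, and these are simple zeros of `g - t f_j = (ψ - t) f_j`.
-/

open Set

section Evaluation

variable {K X ι : Type*} [Field K] [Fintype ι] {f : ι → X → K}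

theorem span_image_eval_eq_top {s : Set X}
    (hli : ∀ c : ι → K, (∀ x ∈ s, ∑ i, c i * f i x = 0) → c = 0) :
    Submodule.span K ((fun x i => f i x) '' s) = ⊤ := by
  classical
  by_contra hne
  obtain ⟨φ, hφ0, hφ⟩ := Submodule.exists_dual_map_eq_bot_of_lt_top (lt_top_iff_ne_top.2 hne)
    inferInstance
  set c : ι → K := fun i => φ fun j => if i = j then 1 else 0
  have hφ_apply : ∀ u, φ u = ∑ i, c i * u i := fun u => by
    rw [LinearMap.pi_apply_eq_sum_univ φ u]
    exact Finset.sum_congr rfl fun i _ => mul_comm _ _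
  have hc : c = 0 := hli c fun x hx => by
    rw [← hφ_apply]
    exact (Submodule.eq_bot_iff _).1 hφ _
      (Submodule.mem_map_of_mem (Submodule.subset_span ⟨x, hx, rfl⟩))
  exact hφ0 (LinearMap.ext fun u => by simp [hφ_apply u, hc])

theorem exists_linearIndependent_eval {s : Set X}
    (hli : ∀ c : ι → K, (∀ x ∈ s, ∑ i, c i * f i x = 0) → c = 0) :
    ∃ y : ι → X, (∀ k, y k ∈ s) ∧ LinearIndependent K (fun k i => f i (y k)) := by
  obtain ⟨κ, a, -, hspan, hind⟩ :=
    exists_linearIndependent' K (fun x : s => fun i => f i (x : X))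
  have hspan_top : Submodule.span K (Set.range fun k i => f i (a k : X)) = ⊤ := by
    rw [← span_image_eval_eq_top hli, Set.image_eq_range]
    exact hspan
  let e := (Module.Basis.mk hind hspan_top.ge).indexEquiv (Pi.basisFun K ι)
  exact ⟨fun k => a (e.symm k), fun k => (a (e.symm k)).2, hind.comp e.symm e.symm.injective⟩

theorem exists_sum_mul_eq_of_linearIndependent [DecidableEq ι] {x : ι → X}
    (hind : LinearIndependent K (fun k i => f i (x k))) (w : ι → K) :
    ∃ c : ι → K, ∀ k, ∑ i, c i * f i (x k) = w k := by
  let M : Matrix ι ι K := Matrix.of fun k i => f i (x k)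
  obtain ⟨c, hc⟩ := Matrix.mulVec_surjective_iff_isUnit.2
    (Matrix.linearIndependent_rows_iff_isUnit (A := M).1 hind) w
  exact ⟨c, fun k => by simpa [M, Matrix.mulVec, dotProduct, mul_comm] using congrFun hc k⟩

end Evaluation

theorem exists_strictMono_linearIndependent_eval {n : ℕ} {f : Fin n → ℝ → ℝ} {s : Set ℝ}
    (hli : ∀ c : Fin n → ℝ, (∀ x ∈ s, ∑ i, c i * f i x = 0) → c = 0) :
    ∃ x : Fin n → ℝ, StrictMono x ∧ (∀ k, x k ∈ s) ∧
      LinearIndependent ℝ (fun k i => f i (x k)) := by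
  obtain ⟨y, hy_mem, hy_ind⟩ := exists_linearIndependent_eval hli
  have hy_inj : Function.Injective y := .of_comp (f := fun x i => f i x) hy_ind.injective
  let σ := Tuple.sort y
  exact ⟨y ∘ σ, (Tuple.monotone_sort y).strictMono_of_injective (hy_inj.comp σ.injective),
    fun k => hy_mem (σ k), hy_ind.comp σ σ.injective⟩

theorem hasDerivAt_sub_const_mul_of_eq_mul {𝕜 : Type*} [NontriviallyNormedField 𝕜]
    {g φ : 𝕜 → 𝕜} {g' φ' t z : 𝕜} (hg : HasDerivAt g g' z) (hφ : HasDerivAt φ φ' z)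
    (hφz : φ z ≠ 0) (hgz : g z = t * φ z) :
    HasDerivAt (fun u => g u - t * φ u) (deriv (fun u => g u / φ u) z * φ z) z := by
  have hslope : (g' * φ z - g z * φ') / φ z ^ 2 * φ z = g' - t * φ' := by
    rw [hgz]
    field_simp
  rw [(hg.fun_div hφ hφz).deriv, hslope]
  exact hg.sub (hφ.const_mul t)

theorem AnalyticOnNhd.finite_setOf_deriv_eq_zero {ψ : ℝ → ℝ} {a b u : ℝ}
    (hψ : AnalyticOnNhd ℝ ψ (Icc a b)) (hu : u ∈ Icc a b) (hψu : ψ u ≠ ψ a) :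
    {v ∈ Icc a b | deriv ψ v = 0}.Finite := by
  rcases hψ.deriv.eqOn_zero_or_eventually_ne_zero_of_preconnected isPreconnected_Icc with h | h
  · refine absurd ((constant_of_has_deriv_right_zero hψ.continuousOn fun v hv => ?_) u hu)
      hψu
    have hv' : v ∈ Icc a b := Ico_subset_Icc_self hv
    simpa [h hv'] using (hψ v hv').differentiableAt.hasDerivAt.hasDerivWithinAt
  · exact (isCompact_Icc.finite_sdiff_of_mem_codiscreteWithin h).subset
      fun v hv => ⟨hv.1, fun hne => hne hv.2⟩

theorem exists_mem_Ioo_eq_of_mem_uIoo {ψ : ℝ → ℝ} {a b t : ℝ} (hab : a ≤ b)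
    (hψ : ContinuousOn ψ (Icc a b)) (ht : t ∈ uIoo (ψ a) (ψ b)) : ∃ z ∈ Ioo a b, ψ z = t := by
  rcases le_total (ψ a) (ψ b) with h | h
  · exact intermediate_value_Ioo hab hψ (by simpa [uIoo, h] using ht)
  · exact intermediate_value_Ioo' hab hψ (by simpa [uIoo, h] using ht)

theorem exists_strictMono_regular_crossings {p : ℕ} (hp : 0 < p) {ψ : ℝ → ℝ}
    {x : Fin (p + 1) → ℝ} (hx : StrictMono x)
    (hψ : AnalyticOnNhd ℝ ψ (Icc (x 0) (x (Fin.last p))))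
    (hψx : ∀ k, ψ (x k) = (-1) ^ (k : ℕ)) :
    ∃ t, ∃ z : Fin p → ℝ, StrictMono z ∧ ∀ k, z k ∈ Icc (x 0) (x (Fin.last p)) ∧
      ψ (z k) = t ∧ deriv ψ (z k) ≠ 0 := by
  have hx_Icc : ∀ k, x k ∈ Icc (x 0) (x (Fin.last p)) :=
    fun k => ⟨hx.monotone (Fin.zero_le k), hx.monotone (Fin.le_last k)⟩
  have hcrit : {v ∈ Icc (x 0) (x (Fin.last p)) | deriv ψ v = 0}.Finite :=
    hψ.finite_setOf_deriv_eq_zero (hx_Icc ⟨1, by omega⟩) (by norm_num [hψx])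
  obtain ⟨t, ht, ht_regular⟩ :=
    ((Ioo_infinite (by norm_num : (-1 : ℝ) < 1)).sdiff (hcrit.image ψ)).nonempty
  have hcross : ∀ k : Fin p, ∃ z ∈ Ioo (x k.castSucc) (x k.succ), ψ z = t := fun k => by
    refine exists_mem_Ioo_eq_of_mem_uIoo (hx Fin.castSucc_lt_succ).le
      (hψ.continuousOn.mono (Icc_subset_Icc (hx_Icc _).1 (hx_Icc _).2)) ?_
    rw [hψx, hψx, Fin.val_succ, pow_succ, Fin.val_castSucc]
    rcases neg_one_pow_eq_or ℝ (k : ℕ) with h | h <;> simpa [h, uIoo] using ht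
  choose z hz_mem hz_val using hcross
  refine ⟨t, z, fun k l hkl => ?_, fun k => ?_⟩
  · calc z k < x k.succ := (hz_mem k).2
      _ ≤ x l.castSucc := hx.monotone (Fin.succ_le_castSucc_iff.2 hkl)
      _ < z l := (hz_mem l).1
  · have hzK : z k ∈ Icc (x 0) (x (Fin.last p)) :=
      ⟨(hx_Icc _).1.trans (hz_mem k).1.le, (hz_mem k).2.le.trans (hx_Icc _).2⟩
    exact ⟨hzK, hz_val k, fun h0 => ht_regular ⟨z k, ⟨hzK, h0⟩, hz_val k⟩⟩

theorem exists_combination_with_p_simple_zeros_general (p : ℕ) (a b : ℝ)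
    (f : Fin (p + 1) → ℝ → ℝ)
    (han : ∀ i, AnalyticOnNhd ℝ (f i) (Set.Ioo a b))
    (hli : ∀ c : Fin (p + 1) → ℝ,
      (∀ x ∈ Set.Ioo a b, ∑ i, c i * f i x = 0) → c = 0)
    (hsign : ∃ j, (∀ x ∈ Set.Ioo a b, 0 < f j x) ∨ (∀ x ∈ Set.Ioo a b, f j x < 0)) :
    ∃ C : Fin (p + 1) → ℝ, ∃ z : Fin p → ℝ, StrictMono z ∧
      ∀ i, z i ∈ Set.Ioo a b ∧ (∑ s, C s * f s (z i)) = 0 ∧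
        deriv (fun x => ∑ s, C s * f s x) (z i) ≠ 0 := by
  obtain ⟨j, hj⟩ := hsign
  have hfj : ∀ x ∈ Ioo a b, f j x ≠ 0 := fun x hx =>
    hj.elim (fun h => (h x hx).ne') (fun h => (h x hx).ne)
  rcases p.eq_zero_or_pos with rfl | hp
  · exact ⟨0, Fin.elim0, fun i => i.elim0, fun i => i.elim0⟩
  obtain ⟨x, hx_mono, hx_mem, hx_ind⟩ := exists_strictMono_linearIndependent_eval hli
  obtain ⟨c, hc⟩ :=
    exists_sum_mul_eq_of_linearIndependent hx_ind fun k => (-1) ^ (k : ℕ) * f j (x k)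
  set g : ℝ → ℝ := fun u => ∑ i, c i * f i u
  have hg : AnalyticOnNhd ℝ g (Ioo a b) :=
    Finset.analyticOnNhd_fun_sum _ fun i _ => analyticOnNhd_const.mul (han i)
  have hK : Icc (x 0) (x (Fin.last p)) ⊆ Ioo a b := Icc_subset_Ioo (hx_mem 0).1 (hx_mem _).2
  obtain ⟨t, z, hz_mono, hz⟩ := exists_strictMono_regular_crossings hp hx_mono
    ((hg.div (han j) hfj).mono hK) fun k => by simp [g, hc, hfj _ (hx_mem k)]
  set C : Fin (p + 1) → ℝ := c - Pi.single j t
  have hsum : ∀ u, ∑ s, C s * f s u = g u - t * f j u := fun u => by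
    simp [C, g, sub_mul, Finset.sum_sub_distrib, Pi.single_apply]
  refine ⟨C, z, hz_mono, fun k => ?_⟩
  obtain ⟨hzK, hψz, hψ'z⟩ := hz k
  have hzab := hK hzK
  have hgz : g (z k) = t * f j (z k) := (div_eq_iff (hfj _ hzab)).1 hψz
  refine ⟨hzab, by rw [hsum, hgz, sub_self], ?_⟩
  rw [funext hsum, (hasDerivAt_sub_const_mul_of_eq_mul (hg _ hzab).differentiableAt.hasDerivAt
    (han j _ hzab).differentiableAt.hasDerivAt (hfj _ hzab) hgz).deriv]
  exact mul_ne_zero hψ'z (hfj _ hzab)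

/-- given `p+1` linearly independent analytic functions on an open
interval, one of which has constant sign, some linear combination has at least `p`
simple zeros in the interval. -/
theorem exists_combination_with_p_simple_zeros (p : ℕ) (a b : ℝ) (hab : a < b)
    (f : Fin (p + 1) → ℝ → ℝ)
    (han : ∀ i, AnalyticOnNhd ℝ (f i) (Set.Ioo a b))
    (hli : ∀ c : Fin (p + 1) → ℝ,
      (∀ x ∈ Set.Ioo a b, ∑ i, c i * f i x = 0) → c = 0)
    (hsign : ∃ j, (∀ x ∈ Set.Ioo a b, 0 < f j x) ∨ (∀ x ∈ Set.Ioo a b, f j x < 0)) :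
    ∃ C : Fin (p + 1) → ℝ, ∃ z : Fin p → ℝ, StrictMono z ∧
      ∀ i, z i ∈ Set.Ioo a b ∧ (∑ s, C s * f s (z i)) = 0 ∧
        deriv (fun x => ∑ s, C s * f s x) (z i) ≠ 0 :=
  exists_combination_with_p_simple_zeros_general p a b f han hli hsign
end

section
/- Let m be an odd positive integer and l, d ≥ 0 with d ≤ 2l+1. Then for h = u² + u^{2m}, u > 0, the integral J_{2l-2d, 2d+1} = ∫_{L⁺} x^{2l-2d} y^{2d+1} dx is a constant multiple of (u² + u^{2m})^{l+1}: there is a real constant χ_{l,d} (independent of u) with J_{2l-2d,2d+1} = χ_{l,d} (u² + u^{2m})^{l+1}; moreover J_{2l+1-2d, 2d} = ∫_{L⁺} x^{2l+1-2d} y^{2d} dx = 0, and χ_{l,0} ≠ 0. -/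
lemma periodic_cos_pow_mul_sin_pow (i j : ℕ) (h : Even (i + j)) :
    Function.Periodic (fun t => Real.cos t ^ i * Real.sin t ^ j) Real.pi := by
  intro t
  simp only [Real.cos_add_pi, Real.sin_add_pi]
  rw [neg_pow (Real.cos t) i, neg_pow (Real.sin t) j, mul_mul_mul_comm, ← pow_add,
    h.neg_one_pow, one_mul]

/-- Reduce `Jodd` to an integral over `[0, π]`, for total degree `2(l+1)`. -/
lemma Jodd_eq (m : ℕ) (u : ℝ) (hu : 0 < u) (i j l : ℕ) (hij : i + j + 1 = 2 * (l + 1)) :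
    Jodd m u i j =
      (∫ t in (0:ℝ)..Real.pi, Real.cos t ^ i * Real.sin t ^ (j + 1)) *
        (u ^ 2 + u ^ (2 * m)) ^ (l + 1) := by
  have h0 : (0:ℝ) ≤ u ^ 2 + u ^ (2 * m) := by positivity
  have heven : Even (i + (j + 1)) := ⟨l + 1, by omega⟩
  unfold Jodd
  rw [hij]
  have hpow : Real.sqrt (u ^ 2 + u ^ (2 * m)) ^ (2 * (l + 1)) =
      (u ^ 2 + u ^ (2 * m)) ^ (l + 1) := by
    rw [pow_mul, Real.sq_sqrt h0]
  simp_rw [hpow, mul_assoc]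
  rw [intervalIntegral.integral_const_mul, add_comm Real.pi (thetaB m u), mul_comm]
  congr 1
  have := (periodic_cos_pow_mul_sin_pow i (j + 1) heven).intervalIntegral_add_eq
    (thetaB m u) 0
  rw [zero_add] at this
  exact this

/-- for odd `m`, `0 ≤ d ≤ l`, there is a constant `χ_{l,d}` (independent
of `u`) with `J_{2l-2d,2d+1} = χ_{l,d} (u² + u^{2m})^{l+1}`, with `χ_{l,0} ≠ 0`;
moreover `J_{2l+1-2d,2d} = 0`. -/
theorem J_odd_total_degree_structure (m : ℕ) (hm : Odd m) (l d : ℕ) (hd : d ≤ l) :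
    (∃ χ : ℝ,
      (∀ u : ℝ, 0 < u →
        Jodd m u (2 * l - 2 * d) (2 * d + 1) = χ * (u ^ 2 + u ^ (2 * m)) ^ (l + 1)) ∧
      (d = 0 → χ ≠ 0)) ∧
    ∀ u : ℝ, 0 < u → Jodd m u (2 * l + 1 - 2 * d) (2 * d) = 0 := by
  constructor
  · refine ⟨∫ t in (0:ℝ)..Real.pi, Real.cos t ^ (2 * l - 2 * d) * Real.sin t ^ (2 * d + 1 + 1),
      ?_, ?_⟩
    · intro u hu
      exact Jodd_eq m u hu _ _ l (by omega)
    · intro hd0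
      subst hd0
      have hπ := Real.pi_pos
      simp only [Nat.mul_zero, Nat.sub_zero, Nat.zero_add]
      have hc : Continuous fun t => Real.cos t ^ (2 * l) * Real.sin t ^ (0 + 1 + 1) := by
        continuity
      have h1 : 0 < ∫ t in (0:ℝ)..(Real.pi / 2),
          Real.cos t ^ (2 * l) * Real.sin t ^ (0 + 1 + 1) := by
        apply intervalIntegral.intervalIntegral_pos_of_pos_on (hc.intervalIntegrable _ _)
        · intro x hx
          have hcos : 0 < Real.cos x :=
            Real.cos_pos_of_mem_Ioo ⟨by linarith [hx.1], hx.2⟩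
          have hsin : 0 < Real.sin x :=
            Real.sin_pos_of_pos_of_lt_pi hx.1 (by linarith [hx.2])
          positivity
        · linarith
      have h2 : 0 ≤ ∫ t in (Real.pi / 2)..Real.pi,
          Real.cos t ^ (2 * l) * Real.sin t ^ (0 + 1 + 1) := by
        apply intervalIntegral.integral_nonneg (by linarith)
        intro x _
        have hce : 0 ≤ Real.cos x ^ (2 * l) := by rw [pow_mul]; positivity
        have hse : 0 ≤ Real.sin x ^ (0 + 1 + 1) := by
          show 0 ≤ Real.sin x ^ 2; positivity
        positivity
      have hsplit := intervalIntegral.integral_add_adjacent_intervals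
        (hc.intervalIntegrable (μ := MeasureTheory.volume) 0 (Real.pi / 2))
        (hc.intervalIntegrable (μ := MeasureTheory.volume) (Real.pi / 2) Real.pi)
      have : 0 < ∫ t in (0:ℝ)..Real.pi, Real.cos t ^ (2 * l) * Real.sin t ^ (0 + 1 + 1) := by
        rw [← hsplit]; linarith
      exact ne_of_gt this
  · intro u hu
    rw [Jodd_eq m u hu _ _ l (by omega)]
    have hzero : (∫ t in (0:ℝ)..Real.pi,
        Real.cos t ^ (2 * l + 1 - 2 * d) * Real.sin t ^ (2 * d + 1)) = 0 := by
      have hi : 2 * l + 1 - 2 * d = 2 * (l - d) + 1 := by omega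
      rw [hi]
      have : (∫ t in (0:ℝ)..Real.pi,
          Real.cos t ^ (2 * (l - d) + 1) * Real.sin t ^ (2 * d + 1)) =
          ∫ t in (0:ℝ)..Real.pi,
            Real.sin t ^ (2 * d + 1) * Real.cos t ^ (2 * (l - d) + 1) := by
        simp_rw [mul_comm]
      rw [this, integral_sin_pow_mul_cos_pow_odd]
      simp
    rw [hzero, zero_mul]
end
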